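/- arXiv:1510.04158 — 3 statements merged into one kernel-verified Lean document; each statement's English description precedes it below -/
import Mathlib

section
/- Let P be an N×N complex matrix. For each column index j and each row index k, the entry P k j is determined up to a single global phase common to all entries, by the moduli |P k j| for all k, j together with the products (P k 1)·conj(P k j) for all k and all j ≥ 2, provided P k 1 ≠ 0 for all k and moreover the first column entries' phases are consistent. Formally: if P and Q are N×N complex matrices with |P k j| = |Q k j| for all k,j, with (P k 1)·conj(P k j) = (Q k 1)·conj(Q k j) for all k,j, and with (P 1 1)·conj(P k 1) = (Q 1 1)·conj(Q k 1) for all k, and if all entries of P and Q are nonzero, then there exists a unimodular complex number c with Q = c • P. -/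
theorem RCLike.norm_div_eq_one_of_mul_star_eq {𝕜 : Type*} [RCLike 𝕜] {a b : 𝕜} (ha : a ≠ 0)
    (h : a * star a = b * star b) : ‖b / a‖ = 1 := by
  have hsq : ‖a‖ ^ 2 = ‖b‖ ^ 2 := by
    simpa only [← starRingEnd_apply, RCLike.mul_conj, ← RCLike.ofReal_pow,
      RCLike.ofReal_inj] using h
  have hnorm : ‖a‖ = ‖b‖ := (pow_left_inj₀ (norm_nonneg a) (norm_nonneg b) two_ne_zero).mp hsq
  rw [norm_div, ← hnorm, div_self (norm_ne_zero_iff.mpr ha)]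

theorem Matrix.eq_smul_of_mul_star_eq {m n K : Type*} [Field K] [StarRing K]
    {P Q : Matrix m n K} (r : m) (s : n) (hP : ∀ k, P k s ≠ 0)
    (hcol : ∀ k, P r s * star (P k s) = Q r s * star (Q k s))
    (hrow : ∀ k j, P k s * star (P k j) = Q k s * star (Q k j)) :
    Q = (Q r s / P r s) • P := by
  ext k j
  have hrow' : star (P k s) * P k j = star (Q k s) * Q k j := by
    simpa only [star_mul, star_star, mul_comm] using congrArg star (hrow k j)
  have hstar : star (P k s) ≠ 0 := star_ne_zero.mpr (hP k)
  have key : Q k j * (P r s * star (P k s)) = Q r s * P k j * star (P k s) := by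
    linear_combination Q k j * hcol k - Q r s * hrow'
  rw [Matrix.smul_apply, smul_eq_mul, div_mul_eq_mul_div, eq_div_iff (hP r)]
  exact mul_right_cancel₀ hstar (by linear_combination key)

theorem stmt_5_general (N : ℕ) [NeZero N] (P Q : Matrix (Fin N) (Fin N) ℂ)
    (hP : ∀ k j, P k j ≠ 0)
    (hcross : ∀ k j, P k 0 * (starRingEnd ℂ) (P k j) = Q k 0 * (starRingEnd ℂ) (Q k j))
    (hfirst : ∀ k, P 0 0 * (starRingEnd ℂ) (P k 0) = Q 0 0 * (starRingEnd ℂ) (Q k 0)) :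
    ∃ c : ℂ, ‖c‖ = 1 ∧ Q = c • P :=
  ⟨Q 0 0 / P 0 0, RCLike.norm_div_eq_one_of_mul_star_eq (hP 0 0) (hfirst 0),
    Matrix.eq_smul_of_mul_star_eq 0 0 (hP · 0) hfirst hcross⟩

theorem stmt_5 (N : ℕ) [NeZero N] (P Q : Matrix (Fin N) (Fin N) ℂ)
    (hP : ∀ k j, P k j ≠ 0) (hQ : ∀ k j, Q k j ≠ 0)
    (habs : ∀ k j, ‖P k j‖ = ‖Q k j‖)
    (hcross : ∀ k j, P k 0 * (starRingEnd ℂ) (P k j) = Q k 0 * (starRingEnd ℂ) (Q k j))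
    (hfirst : ∀ k, P 0 0 * (starRingEnd ℂ) (P k 0) = Q 0 0 * (starRingEnd ℂ) (Q k 0)) :
    ∃ c : ℂ, ‖c‖ = 1 ∧ Q = c • P :=
  stmt_5_general N P Q hP hcross hfirst
end

section
/- Let Ξ, Ξ' : Fin m → ℂ be sequences with all entries nonzero, such that |Ξ k| = |Ξ' k| for all k and Ξ k · conj(Ξ (k+1)) = Ξ' k · conj(Ξ' (k+1)) for all k < m−1. Then there exists a unimodular c ∈ ℂ with Ξ' k = c · Ξ k for all k. -/
/-!
With `c = Ξ' 0 / Ξ 0`, which is unimodular because `|Ξ 0| = |Ξ' 0|`, the relation `Ξ' k = c Ξ k`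
propagates from `k` to `k + 1`: cancelling `Ξ k` in the `k`-th cross-correlation identity gives
`conj (Ξ (k+1)) = c conj (Ξ' (k+1))`, and `c conj c = 1`.
-/

open ComplexConjugate

variable {𝕜 : Type*} [RCLike 𝕜]

theorem RCLike.eq_mul_of_mul_conj_eq {a b a' b' c : 𝕜} (ha : a ≠ 0) (hc : ‖c‖ = 1)
    (ha' : a' = c * a) (h : a * conj b = a' * conj b') : b' = c * b := by
  have hconj : conj b = c * conj b' := mul_left_cancel₀ ha (by rw [h, ha']; ring)
  calc b' = c * conj c * b' := by rw [RCLike.mul_conj, hc]; simp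
    _ = c * conj (conj b) := by rw [hconj, map_mul, RCLike.conj_conj, mul_assoc]
    _ = c * b := by rw [RCLike.conj_conj]

theorem Fin.eq_mul_of_mul_conj_succ_eq {m : ℕ} {Ξ Ξ' : Fin m → 𝕜} {c : 𝕜}
    (hne : ∀ k, Ξ k ≠ 0) (hc : ‖c‖ = 1)
    (hcross : ∀ k : Fin m, ∀ h : k.1 + 1 < m,
      Ξ k * conj (Ξ ⟨k.1 + 1, h⟩) = Ξ' k * conj (Ξ' ⟨k.1 + 1, h⟩))
    (h0 : ∀ h : 0 < m, Ξ' ⟨0, h⟩ = c * Ξ ⟨0, h⟩) (k : Fin m) : Ξ' k = c * Ξ k := by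
  obtain ⟨n, hn⟩ := k
  induction n with
  | zero => exact h0 hn
  | succ n ih =>
    exact RCLike.eq_mul_of_mul_conj_eq (hne _) hc (ih (by omega)) (hcross ⟨n, by omega⟩ hn)

theorem stmt_12_general (m : ℕ) (hm : 1 ≤ m) (Ξ Ξ' : Fin m → ℂ)
    (hne : ∀ k, Ξ k ≠ 0)
    (habs : ∀ k, ‖Ξ k‖ = ‖Ξ' k‖)
    (hcross : ∀ k : Fin m, ∀ h : k.1 + 1 < m,
      Ξ k * (starRingEnd ℂ) (Ξ ⟨k.1 + 1, h⟩) = Ξ' k * (starRingEnd ℂ) (Ξ' ⟨k.1 + 1, h⟩)) :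
    ∃ c : ℂ, ‖c‖ = 1 ∧ ∀ k, Ξ' k = c * Ξ k := by
  set c := Ξ' ⟨0, hm⟩ / Ξ ⟨0, hm⟩
  have hc : ‖c‖ = 1 := by
    rw [norm_div, ← habs, div_self (norm_ne_zero_iff.2 (hne _))]
  exact ⟨c, hc, Fin.eq_mul_of_mul_conj_succ_eq hne hc hcross
    fun _ => (div_mul_cancel₀ _ (hne _)).symm⟩

theorem stmt_12 (m : ℕ) (hm : 1 ≤ m) (Ξ Ξ' : Fin m → ℂ)
    (hne : ∀ k, Ξ k ≠ 0) (hne' : ∀ k, Ξ' k ≠ 0)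
    (habs : ∀ k, ‖Ξ k‖ = ‖Ξ' k‖)
    (hcross : ∀ k : Fin m, ∀ h : k.1 + 1 < m,
      Ξ k * (starRingEnd ℂ) (Ξ ⟨k.1 + 1, h⟩) = Ξ' k * (starRingEnd ℂ) (Ξ' ⟨k.1 + 1, h⟩)) :
    ∃ c : ℂ, ‖c‖ = 1 ∧ ∀ k, Ξ' k = c * Ξ k :=
  stmt_12_general m hm Ξ Ξ' hne habs hcross
end

section
/- Let H, H' be N×N complex Hankel matrices with generating sequences Ξ, Ξ' : Fin (2N−1) → ℂ, all of whose values are nonzero. Suppose |Ξ k| = |Ξ' k| for all k, Ξ k · conj(Ξ (k+1)) = Ξ' k · conj(Ξ' (k+1)) for all k ≤ 2N−3, and Ξ 0, Ξ' 0 are both positive reals. Then H = H'. -/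
open scoped ComplexOrder

theorem RCLike.eq_of_norm_eq_of_nonneg {K : Type*} [RCLike K] {z w : K} (hz : 0 ≤ z) (hw : 0 ≤ w)
    (h : ‖z‖ = ‖w‖) : z = w := by
  rw [← norm_of_nonneg' hz, ← norm_of_nonneg' hw, h]

theorem Fin.eq_of_head_eq_of_mul_star_succ_eq {K : Type*} [Field K] [StarRing K] {n : ℕ}
    {f g : Fin n → K} (hf : ∀ k, f k ≠ 0) (h₀ : ∀ h : 0 < n, f ⟨0, h⟩ = g ⟨0, h⟩)
    (hcorr : ∀ k : Fin n, ∀ h : k.1 + 1 < n,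
      f k * star (f ⟨k.1 + 1, h⟩) = g k * star (g ⟨k.1 + 1, h⟩)) :
    f = g := by
  funext ⟨m, hm⟩
  induction m with
  | zero => exact h₀ hm
  | succ m ih =>
    have hc := hcorr ⟨m, by omega⟩ hm
    rw [← ih (by omega)] at hc
    exact star_injective (mul_left_cancel₀ (hf _) hc)

theorem stmt_15 (N : ℕ) (hN : 1 ≤ N) (H H' : Matrix (Fin N) (Fin N) ℂ)
    (Ξ Ξ' : Fin (2 * N - 1) → ℂ)
    (hH : ∀ r s : Fin N, H r s = Ξ ⟨r.1 + s.1, by have := r.2; have := s.2; omega⟩)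
    (hH' : ∀ r s : Fin N, H' r s = Ξ' ⟨r.1 + s.1, by have := r.2; have := s.2; omega⟩)
    (hne : ∀ k, Ξ k ≠ 0)
    (habs : ∀ k, ‖Ξ k‖ = ‖Ξ' k‖)
    (hcross : ∀ k : Fin (2 * N - 1), ∀ h : k.1 + 1 < 2 * N - 1,
      Ξ k * (starRingEnd ℂ) (Ξ ⟨k.1 + 1, h⟩) = Ξ' k * (starRingEnd ℂ) (Ξ' ⟨k.1 + 1, h⟩))
    (hpos : 0 < (Ξ ⟨0, by omega⟩).re ∧ (Ξ ⟨0, by omega⟩).im = 0)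
    (hpos' : 0 < (Ξ' ⟨0, by omega⟩).re ∧ (Ξ' ⟨0, by omega⟩).im = 0) :
    H = H' := by
  have hΞ : Ξ = Ξ' := Fin.eq_of_head_eq_of_mul_star_succ_eq hne
    (fun _ ↦ RCLike.eq_of_norm_eq_of_nonneg (RCLike.pos_iff.2 hpos).le
      (RCLike.pos_iff.2 hpos').le (habs _))
    hcross
  ext r s
  rw [hH, hH', hΞ]
end
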